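/- arXiv:2207.06979 — 2 statements merged into one kernel-verified Lean document; each statement's English description precedes it below -/
import Mathlib

section
/- Let d ≥ 1 and let Q₀ ⊂ ℝ^d be a cube. There is a constant C > 0 depending only on d such that for every u ∈ L¹(Q₀;𝓗^d_∞), (1/C) ‖u‖_{BMO^d(Q₀)} ≤ ‖u‖_{BMO(Q₀)} ≤ C ‖u‖_{BMO^d(Q₀)}, where ‖u‖_{BMO(Q₀)} is the classical John–Nirenberg seminorm with respect to Lebesgue measure; consequently BMO^d(Q₀) coincides with the classical space BMO(Q₀). -/
open Set MeasureTheory ENNReal NNReal Filter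

noncomputable section

/-- `ℝ^d` with the Euclidean metric. -/
abbrev Euc (d : ℕ) : Type := EuclideanSpace ℝ (Fin d)

/-- An axis-parallel cube in `ℝ^d`, given by its lower corner and (positive) side length. -/
structure Cube (d : ℕ) where
  corner : Fin d → ℝ
  side : ℝ
  side_pos : 0 < side

namespace Cube

/-- The (half-open) set of points of the cube. -/
def set {d : ℕ} (Q : Cube d) : Set (Euc d) :=
  {x : Euc d | ∀ i, Q.corner i ≤ x i ∧ x i < Q.corner i + Q.side}

/-- The dyadic lattice `𝓓(Q)` generated by `Q`: all cubes of side `l(Q)·2ⁿ` (`n : ℤ`) with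
corners on the correspondingly rescaled grid anchored at the corner of `Q`; equivalently `Q`,
its dyadic ancestors, and all of their repeated dyadic subdivisions. -/
def dyadic {d : ℕ} (Q : Cube d) : Set (Cube d) :=
  {Q' | ∃ (n : ℤ) (k : Fin d → ℤ), Q'.side = Q.side * 2 ^ n ∧
    ∀ i, Q'.corner i = Q.corner i + (k i : ℝ) * (Q.side * 2 ^ n)}

end Cube

/-- The spherical Hausdorff content `𝓗^β_∞`, with `ω_β = π^{β/2}/Γ(β/2+1)`. -/
def hausdorffContent (d : ℕ) (β : ℝ) (E : Set (Euc d)) : ℝ≥0∞ :=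
  ⨅ (c : ℕ → Euc d × ℝ) (_ : E ⊆ ⋃ i, Metric.ball (c i).1 (c i).2),
    ∑' i, ENNReal.ofReal (Real.pi ^ (β / 2) / Real.Gamma (β / 2 + 1) * (c i).2 ^ β)

/-- The dyadic Hausdorff content `𝓗^{β,Q}_∞` adapted to the cube `Q`. -/
def dyadicContent (d : ℕ) (β : ℝ) (Q : Cube d) (E : Set (Euc d)) : ℝ≥0∞ :=
  ⨅ (c : ℕ → Cube d) (_ : ∀ i, c i ∈ Q.dyadic) (_ : E ⊆ ⋃ i, (c i).set),
    ∑' i, ENNReal.ofReal ((c i).side ^ β)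

/-- The Choquet integral `∫_A f dH := ∫_0^∞ H({x ∈ A : f x > t}) dt`. -/
def choquetIntegral {X : Type*} (H : Set X → ℝ≥0∞) (A : Set X) (f : X → ℝ) : ℝ≥0∞ :=
  ∫⁻ t in Set.Ioi (0 : ℝ), H {x | x ∈ A ∧ t < f x}

/-- `f` is `H`-quasicontinuous: for every `ε > 0` there is an open set `O` with `H O < ε`
such that `f` restricted to `Oᶜ` is continuous. -/
def QuasiContinuous {X : Type*} [TopologicalSpace X] (H : Set X → ℝ≥0∞) (f : X → ℝ) : Prop :=
  ∀ ε : ℝ, 0 < ε → ∃ O : Set X, IsOpen O ∧ H O < ENNReal.ofReal ε ∧ ContinuousOn f Oᶜ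

/-- `f ∈ L¹(A; H)`: `f` is `H`-quasicontinuous and `∫_A |f| dH < ∞`. -/
def MemChoquetL1 {X : Type*} [TopologicalSpace X] (H : Set X → ℝ≥0∞) (A : Set X)
    (f : X → ℝ) : Prop :=
  QuasiContinuous H f ∧ choquetIntegral H A (fun x => |f x|) < ⊤

/-- The `BMO^β(Q₀)` seminorm: `sup_{Q ⊆ Q₀} inf_{c ∈ ℝ} l(Q)^{-β} ∫_Q |u - c| d𝓗^β_∞`. -/
def bmoSeminorm (d : ℕ) (β : ℝ) (Q₀ : Set (Euc d)) (u : Euc d → ℝ) : ℝ≥0∞ :=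
  ⨆ (Q : Cube d) (_ : Q.set ⊆ Q₀),
    ⨅ c : ℝ, choquetIntegral (hausdorffContent d β) Q.set (fun x => |u x - c|) /
      ENNReal.ofReal (Q.side ^ β)

/-- Membership in `BMO^β(Q₀)`. -/
def MemBMO (d : ℕ) (β : ℝ) (Q₀ : Set (Euc d)) (u : Euc d → ℝ) : Prop :=
  MemChoquetL1 (hausdorffContent d β) Q₀ u ∧ bmoSeminorm d β Q₀ u < ⊤


/-- The classical John–Nirenberg BMO seminorm on `Q₀` with respect to Lebesgue measure. -/
def bmoClassical (d : ℕ) (Q₀ : Set (Euc d)) (u : Euc d → ℝ) : ℝ≥0∞ :=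
  ⨆ (Q : Cube d) (_ : Q.set ⊆ Q₀),
    (volume Q.set)⁻¹ * ∫⁻ x in Q.set, ENNReal.ofReal |u x - ⨍ y in Q.set, u y|

/-- The axis-parallel affine subspace of `ℝ^d` obtained by freeing the coordinates in `S`
and fixing the remaining coordinates to the values of `b`. -/
def hyperplane (d : ℕ) (S : Finset (Fin d)) (b : Fin d → ℝ) : Set (Euc d) :=
  {x : Euc d | ∀ i ∉ S, x i = b i}

/-- The classical BMO seminorm of `u` on `Q₀ ∩ H` with respect to the `k`-dimensional
Hausdorff measure `𝓗^k`, the supremum being over the subcubes `Q.set ∩ H ⊆ Q₀ ∩ H`. -/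
def bmoClassicalOnPlane (d k : ℕ) (Q₀ : Cube d) (H : Set (Euc d)) (u : Euc d → ℝ) : ℝ≥0∞ :=
  ⨆ (Q : Cube d) (_ : Q.set ∩ H ⊆ Q₀.set),
    (Measure.hausdorffMeasure (k : ℝ) (Q.set ∩ H))⁻¹ *
      ∫⁻ x in Q.set ∩ H,
        ENNReal.ofReal |u x - ⨍ y in Q.set ∩ H, u y ∂(Measure.hausdorffMeasure (k : ℝ))|
          ∂(Measure.hausdorffMeasure (k : ℝ))

/-- The unique dyadic cube of `𝓓(Q)` of generation `n` (side `l(Q)·2^{-n}`) containing `x`. -/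
def dyadicCubeAt {d : ℕ} (Q : Cube d) (n : ℕ) (x : Euc d) : Cube d where
  corner := fun i => Q.corner i + Q.side * (2 : ℝ)⁻¹ ^ n *
    (⌊(x i - Q.corner i) / (Q.side * (2 : ℝ)⁻¹ ^ n)⌋ : ℝ)
  side := Q.side * (2 : ℝ)⁻¹ ^ n
  side_pos := by have := Q.side_pos; positivity

/-- The dyadic `β`-Hausdorff maximal function associated to `𝓗^{β,Q}_∞`. -/
def dyadicMaximal (d : ℕ) (β : ℝ) (Q : Cube d) (f : Euc d → ℝ) (x : Euc d) : ℝ≥0∞ :=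
  ⨆ (Q' : Cube d) (_ : Q' ∈ Q.dyadic) (_ : x ∈ Q'.set),
    choquetIntegral (dyadicContent d β Q) Q'.set (fun y => |f y|) / ENNReal.ofReal (Q'.side ^ β)

/-- The `BMO^{β,p}(Q₀)` seminorm. -/
def bmoSeminormP (d : ℕ) (β p : ℝ) (Q₀ : Set (Euc d)) (u : Euc d → ℝ) : ℝ≥0∞ :=
  ⨆ (Q : Cube d) (_ : Q.set ⊆ Q₀),
    ⨅ c : ℝ, (choquetIntegral (hausdorffContent d β) Q.set (fun x => |u x - c| ^ p) /
      ENNReal.ofReal (Q.side ^ β)) ^ (1 / p)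

/-- The standard normalization constant `γ(α) = π^{d/2} 2^α Γ(α/2) / Γ((d-α)/2)`. -/
def rieszConst (d : ℕ) (α : ℝ) : ℝ :=
  Real.pi ^ ((d : ℝ) / 2) * 2 ^ α * Real.Gamma (α / 2) / Real.Gamma (((d : ℝ) - α) / 2)

/-- The Riesz potential `I_α μ (x) = γ(α)⁻¹ ∫ |x - y|^{α - d} dμ(y)`. -/
def rieszPotential (d : ℕ) (α : ℝ) (μ : Measure (Euc d)) (x : Euc d) : ℝ :=
  (rieszConst d α)⁻¹ * (∫⁻ y, ENNReal.ofReal (‖x - y‖ ^ (α - (d : ℝ))) ∂μ).toReal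

/-- The Morrey norm `‖μ‖_{ℳ^γ} = sup_{x, r>0} μ(B(x,r))/r^γ`. -/
def morreyNorm (d : ℕ) (γ : ℝ) (μ : Measure (Euc d)) : ℝ≥0∞ :=
  ⨆ (x : Euc d) (r : ℝ) (_ : 0 < r), μ (Metric.ball x r) / ENNReal.ofReal (r ^ γ)

/-- The dyadic `BMO^β_*(Q₀)` seminorm, where for each subcube `Q` the dyadic Hausdorff
content adapted to that `Q` is used. -/
def bmoDyadicSeminorm (d : ℕ) (β : ℝ) (Q₀ : Set (Euc d)) (u : Euc d → ℝ) : ℝ≥0∞ :=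
  ⨆ (Q : Cube d) (_ : Q.set ⊆ Q₀),
    ⨅ c : ℝ, choquetIntegral (dyadicContent d β Q) Q.set (fun x => |u x - c|) /
      ENNReal.ofReal (Q.side ^ β)

/-- A (possibly infinite) cube in `ℝ^d`: either a finite cube, or a product of intervals
which are infinite in every coordinate direction. -/
def IsGenCube (d : ℕ) (S : Set (Euc d)) : Prop :=
  (∃ Q : Cube d, S = Q.set) ∨
  (∃ I : Fin d → Set ℝ,
      (∀ i, (∃ a, I i = Set.Ici a) ∨ (∃ b, I i = Set.Iio b) ∨ I i = Set.univ) ∧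
      S = {x : Euc d | ∀ i, x i ∈ I i})

/-- The Choquet integral of an `ℝ≥0∞`-valued function. -/
def choquetIntegralE {X : Type*} (H : Set X → ℝ≥0∞) (f : X → ℝ≥0∞) : ℝ≥0∞ :=
  ∫⁻ t in Set.Ioi (0 : ℝ), H {x | ENNReal.ofReal t < f x}

/-! For `β = d` the content `𝓗^d_∞` is comparable to Lebesgue outer measure. Balls have volume
`ω_d r^d`, so `|E| ≤ 𝓗^d_∞(E)`; conversely, fattening an almost optimal cover of `E` for the
Hausdorff measure `μH[d]` into balls gives `𝓗^d_∞ ≤ 2^d ω_d μH[d]`, and `μH[d]` is Lebesgue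
measure up to the bi-Lipschitz change from the sup metric to the Euclidean one. Hence
`𝓗^d_∞`-Choquet integrals and Lebesgue integrals are comparable, and quasicontinuous functions are
a.e. measurable. The two seminorms then differ by constants only, since
`‖u - u_Q‖_{L¹(Q)} ≤ 2 ‖u - c‖_{L¹(Q)}` for every constant `c`. -/

open Topology Metric

section Choquet

variable {X : Type*}

lemma choquetIntegral_mono_content {H₁ H₂ : Set X → ℝ≥0∞} (h : ∀ s, H₁ s ≤ H₂ s)
    (A : Set X) (f : X → ℝ) : choquetIntegral H₁ A f ≤ choquetIntegral H₂ A f :=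
  lintegral_mono fun _ => h _

lemma choquetIntegral_le_const_mul {H₁ H₂ : Set X → ℝ≥0∞} {C : ℝ≥0∞} (hC : C ≠ ⊤)
    (h : ∀ s, H₁ s ≤ C * H₂ s) (A : Set X) (f : X → ℝ) :
    choquetIntegral H₁ A f ≤ C * choquetIntegral H₂ A f :=
  (lintegral_mono fun _ => h _).trans_eq (lintegral_const_mul' _ _ hC)

lemma choquetIntegral_measure_eq_setLIntegral [MeasurableSpace X] {μ : Measure X} {A : Set X}
    (hA : MeasurableSet A) {f : X → ℝ} (hf₀ : ∀ x, 0 ≤ f x)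
    (hf : AEMeasurable f (μ.restrict A)) :
    choquetIntegral μ A f = ∫⁻ x in A, ENNReal.ofReal (f x) ∂μ := by
  rw [lintegral_eq_lintegral_meas_lt _ (.of_forall hf₀) hf, choquetIntegral]
  refine lintegral_congr fun t => ?_
  rw [Measure.restrict_apply' hA, inter_comm]
  rfl

end Choquet

lemma QuasiContinuous.aemeasurable {X : Type*} [TopologicalSpace X] [MeasurableSpace X]
    [OpensMeasurableSpace X] {μ : Measure X} {H : Set X → ℝ≥0∞} (hμ : ∀ s, μ s ≤ H s)
    {u : X → ℝ} (hu : QuasiContinuous H u) : AEMeasurable u μ := by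
  choose O hO_open hO_small hO_cont using fun n : ℕ => hu (1 / (n + 1)) (by positivity)
  have hnull : μ (⋂ n, O n) = 0 := by
    refine le_antisymm (ge_of_tendsto' (x := atTop) ?_ fun n =>
      (measure_mono (iInter_subset O n)).trans ((hμ _).trans (hO_small n).le)) zero_le
    simpa [Function.comp_def] using
      (ENNReal.continuous_ofReal.tendsto 0).comp tendsto_one_div_add_atTop_nhds_zero_nat
  have hfull : μ.restrict (⋃ n, (O n)ᶜ) = μ := by
    rw [← compl_iInter]
    exact Measure.restrict_eq_self_of_ae_mem (compl_mem_ae_iff.2 hnull)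
  rw [← hfull, aemeasurable_iUnion_iff]
  exact fun n => (hO_cont n).aemeasurable (hO_open n).measurableSet.compl

lemma lintegral_abs_sub_average_le {α : Type*} [MeasurableSpace α] {μ : Measure α}
    [IsFiniteMeasure μ] {u : α → ℝ} (hu : AEMeasurable u μ) (c : ℝ) :
    ∫⁻ x, ENNReal.ofReal |u x - ⨍ y, u y ∂μ| ∂μ ≤ 2 * ∫⁻ x, ENNReal.ofReal |u x - c| ∂μ := by
  simp_rw [← Real.enorm_eq_ofReal_abs]
  set m := ⨍ y, u y ∂μ
  by_cases hfin : ∫⁻ x, ‖u x - c‖ₑ ∂μ = ⊤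
  · simp [hfin]
  have hint : Integrable (fun x => u x - c) μ :=
    ⟨(hu.sub_const c).aestronglyMeasurable, lt_top_iff_ne_top.2 hfin⟩
  have hu_int : Integrable u μ := by simpa [sub_eq_add_neg] using hint
  have hmean : ‖m - c‖ₑ * μ univ ≤ ∫⁻ x, ‖u x - c‖ₑ ∂μ :=
    calc ‖m - c‖ₑ * μ univ = ‖μ.real univ • (m - c)‖ₑ := by
          rw [enorm_smul, measureReal_def, Real.enorm_toReal (measure_ne_top μ univ), mul_comm]
      _ = ‖∫ x, (u x - c) ∂μ‖ₑ := by
          rw [smul_sub, measure_smul_average, integral_sub hu_int (integrable_const c),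
            integral_const]
      _ ≤ ∫⁻ x, ‖u x - c‖ₑ ∂μ := enorm_integral_le_lintegral_enorm _
  calc ∫⁻ x, ‖u x - m‖ₑ ∂μ ≤ ∫⁻ x, (‖u x - c‖ₑ + ‖m - c‖ₑ) ∂μ :=
        lintegral_mono fun x => by simpa using enorm_sub_le (E := ℝ) (a := u x - c) (b := m - c)
    _ = ∫⁻ x, ‖u x - c‖ₑ ∂μ + ‖m - c‖ₑ * μ univ := by
        rw [lintegral_add_right _ measurable_const, lintegral_const]
    _ ≤ ∫⁻ x, ‖u x - c‖ₑ ∂μ + ∫⁻ x, ‖u x - c‖ₑ ∂μ := add_le_add_right hmean _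
    _ = 2 * ∫⁻ x, ‖u x - c‖ₑ ∂μ := (two_mul _).symm

lemma ENNReal.add_rpow_le_two_rpow_mul (x y : ℝ≥0∞) {β : ℝ} (hβ : 0 ≤ β) :
    (x + y) ^ β ≤ 2 ^ β * (x ^ β + y ^ β) := by
  rcases le_total 1 β with hβ₁ | hβ₁
  · refine (ENNReal.rpow_add_le_mul_rpow_add_rpow x y hβ₁).trans ?_
    gcongr
    · exact one_le_two
    · linarith
  · calc (x + y) ^ β ≤ x ^ β + y ^ β := ENNReal.rpow_add_le_add_rpow x y hβ hβ₁
      _ ≤ 2 ^ β * (x ^ β + y ^ β) :=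
        le_mul_of_one_le_left zero_le <| by
          simpa using ENNReal.rpow_le_rpow_of_exponent_le one_le_two hβ

lemma ENNReal.le_mul_of_forall_le_mul_add {a b K : ℝ≥0∞} (hK : K ≠ ⊤)
    (h : ∀ η : ℝ≥0∞, η ≠ 0 → a ≤ K * (b + η)) : a ≤ K * b := by
  have hlim : Tendsto (fun η => K * (b + η)) (𝓝[>] 0) (𝓝 (K * (b + 0))) :=
    ENNReal.Tendsto.const_mul
      (tendsto_const_nhds.add (tendsto_nhdsWithin_of_tendsto_nhds tendsto_id)) (.inr hK)
  rw [add_zero] at hlim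
  exact ge_of_tendsto hlim (eventually_nhdsWithin_of_forall fun η hη => h η (ne_of_gt hη))

namespace Cube

variable {d : ℕ}

lemma set_eq_preimage (Q : Cube d) :
    Q.set = (MeasurableEquiv.toLp 2 (Fin d → ℝ)).symm ⁻¹'
      univ.pi fun i => Ico (Q.corner i) (Q.corner i + Q.side) := by
  ext x
  simp [Cube.set, Set.mem_pi, MeasurableEquiv.coe_toLp_symm]

lemma measurableSet_set (Q : Cube d) : MeasurableSet Q.set := by
  rw [set_eq_preimage]
  exact (MeasurableEquiv.toLp 2 (Fin d → ℝ)).symm.measurable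
    (MeasurableSet.univ_pi fun i => measurableSet_Ico)

lemma volume_set (Q : Cube d) : volume Q.set = ENNReal.ofReal (Q.side ^ (d : ℝ)) := by
  rw [set_eq_preimage, (EuclideanSpace.volume_preserving_symm_measurableEquiv_toLp (Fin d)
      ).measure_preimage (MeasurableSet.univ_pi fun i => measurableSet_Ico).nullMeasurableSet,
    volume_pi_pi]
  simp only [Real.volume_Ico, add_sub_cancel_left, Finset.prod_const, Finset.card_univ,
    Fintype.card_fin, Real.rpow_natCast, ENNReal.ofReal_pow Q.side_pos.le]

lemma volume_set_ne_top (Q : Cube d) : volume Q.set ≠ ⊤ := by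
  simp [volume_set]

end Cube

/-- `ω_β`; for `β = d` it is the volume of the unit ball of `ℝ^d`. -/
def unitBallVolume (β : ℝ) : ℝ := Real.pi ^ (β / 2) / Real.Gamma (β / 2 + 1)

lemma unitBallVolume_pos {β : ℝ} (hβ : 0 ≤ β) : 0 < unitBallVolume β :=
  div_pos (Real.rpow_pos_of_pos Real.pi_pos _) (Real.Gamma_pos_of_pos (by positivity))

section Content

variable {d : ℕ}

lemma volume_ball_eq_unitBallVolume (hd : 0 < d) (x : Euc d) {r : ℝ} (hr : 0 ≤ r) :
    volume (Metric.ball x r) = ENNReal.ofReal (unitBallVolume d * r ^ (d : ℝ)) := by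
  have : Nonempty (Fin d) := ⟨⟨0, hd⟩⟩
  have hsqrt : √Real.pi ^ d = Real.pi ^ ((d : ℝ) / 2) := by
    rw [Real.sqrt_eq_rpow, ← Real.rpow_natCast, ← Real.rpow_mul Real.pi_pos.le]
    ring_nf
  rw [EuclideanSpace.volume_ball, Fintype.card_fin, hsqrt, ← ENNReal.ofReal_pow hr,
    ← ENNReal.ofReal_mul (by positivity), Real.rpow_natCast, mul_comm, unitBallVolume]

lemma volume_le_hausdorffContent (hd : 0 < d) (E : Set (Euc d)) :
    volume E ≤ hausdorffContent d d E := by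
  refine le_iInf₂ fun c hc => ?_
  calc volume E ≤ ∑' i, volume (Metric.ball (c i).1 (c i).2) :=
        (measure_mono hc).trans (measure_iUnion_le _)
    _ ≤ _ := ENNReal.tsum_le_tsum fun i => by
        rcases le_or_gt 0 (c i).2 with h | h
        · exact (volume_ball_eq_unitBallVolume hd _ h).le
        · simp [Metric.ball_eq_empty.2 h.le]

lemma hausdorffMeasure_le_volume (E : Set (Euc d)) :
    μH[(d : ℝ)] E ≤ ((d : ℝ≥0∞) ^ (2⁻¹ : ℝ)) ^ (d : ℝ) * volume E := by
  have hlip := PiLp.lipschitzWith_toLp 2 (fun _ : Fin d => ℝ)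
  have hμH : (μH[(d : ℝ)] : Measure (Fin d → ℝ)) = volume := by
    simpa using hausdorffMeasure_pi_real (ι := Fin d)
  calc μH[(d : ℝ)] E = μH[(d : ℝ)] (WithLp.toLp 2 '' (WithLp.toLp 2 ⁻¹' E)) := by
        rw [image_preimage_eq E (WithLp.toLp_surjective 2)]
    _ ≤ _ := hlip.hausdorffMeasure_image_le (Nat.cast_nonneg d) _
    _ = ((d : ℝ≥0∞) ^ (2⁻¹ : ℝ)) ^ (d : ℝ) * volume E := by
        rw [hμH, ← (EuclideanSpace.volume_preserving_symm_measurableEquiv_toLp (Fin d)).symm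
          |>.measure_preimage_equiv E]
        simp [MeasurableEquiv.coe_toLp, ENNReal.coe_rpow_of_nonneg]

lemma hausdorffContent_le_of_cover {β : ℝ} (hβ : 0 < β) {E : Set (Euc d)}
    {t : ℕ → Set (Euc d)} (hE : E ⊆ ⋃ n, t n) (ht : ∀ n, ediam (t n) ≠ ⊤) {η : ℝ≥0∞}
    (hη : η ≠ 0) :
    hausdorffContent d β E ≤
      ENNReal.ofReal (unitBallVolume β) * 2 ^ β * (∑' n, ediam (t n) ^ β + η) := by
  -- Radii are padded by `ρ n` with `∑ ρ n ^ β < η`: sets of diameter `0` need balls too.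
  obtain ⟨δ, hδ_pos, hδ_sum⟩ := ENNReal.exists_pos_sum_of_countable hη ℕ
  set ρ : ℕ → ℝ≥0∞ := fun n => (δ n : ℝ≥0∞) ^ β⁻¹
  have hρ_pos : ∀ n, ρ n ≠ 0 := fun n => by simp [ρ, (hδ_pos n).ne', hβ]
  have hρ_top : ∀ n, ρ n ≠ ⊤ := fun n => by simp [ρ, hβ.le]
  classical
  let x : ℕ → Euc d := fun n => if h : (t n).Nonempty then h.some else 0
  let r : ℕ → ℝ := fun n => (ediam (t n) + ρ n).toReal
  have hr : ∀ n, ENNReal.ofReal (r n) = ediam (t n) + ρ n := fun n =>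
    ENNReal.ofReal_toReal (ENNReal.add_ne_top.2 ⟨ht n, hρ_top n⟩)
  have hcover : E ⊆ ⋃ n, Metric.ball (x n) (r n) := by
    refine hE.trans (iUnion_mono fun n y hy => ?_)
    have hne : (t n).Nonempty := ⟨y, hy⟩
    have hx : x n ∈ t n := by simpa only [x, dif_pos hne] using hne.some_mem
    rw [Metric.mem_ball, ← edist_lt_ofReal, hr]
    exact (edist_le_ediam_of_mem hy hx).trans_lt (ENNReal.lt_add_right (ht n) (hρ_pos n))
  calc hausdorffContent d β E ≤ ∑' n, ENNReal.ofReal (unitBallVolume β * r n ^ β) :=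
        iInf₂_le (fun n => (x n, r n)) hcover
    _ = ∑' n, ENNReal.ofReal (unitBallVolume β) * (ediam (t n) + ρ n) ^ β := by
        refine tsum_congr fun n => ?_
        rw [ENNReal.ofReal_mul (unitBallVolume_pos hβ.le).le,
          ← ENNReal.ofReal_rpow_of_nonneg ENNReal.toReal_nonneg hβ.le, hr]
    _ ≤ ∑' n, ENNReal.ofReal (unitBallVolume β) * (2 ^ β * (ediam (t n) ^ β + δ n)) := by
        refine ENNReal.tsum_le_tsum fun n => ?_
        rw [← ENNReal.rpow_inv_rpow hβ.ne' (δ n : ℝ≥0∞)]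
        gcongr
        exact ENNReal.add_rpow_le_two_rpow_mul _ _ hβ.le
    _ ≤ ENNReal.ofReal (unitBallVolume β) * 2 ^ β * (∑' n, ediam (t n) ^ β + η) := by
        rw [ENNReal.tsum_mul_left, ENNReal.tsum_mul_left, ENNReal.tsum_add, ← mul_assoc]
        gcongr

lemma hausdorffContent_le_hausdorffMeasure {β : ℝ} (hβ : 0 < β) (E : Set (Euc d)) :
    hausdorffContent d β E ≤ ENNReal.ofReal (unitBallVolume β) * 2 ^ β * μH[β] E := by
  have hK : ENNReal.ofReal (unitBallVolume β) * 2 ^ β ≠ ⊤ := by finiteness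
  by_cases hμ : μH[β] E = ⊤
  · simp [hμ, ENNReal.mul_top, unitBallVolume_pos hβ.le]
  refine ENNReal.le_mul_of_forall_le_mul_add hK fun η hη => ?_
  have hη₂ : η / 2 ≠ 0 := by simpa using hη
  obtain ⟨t, hEt, ht_diam, ht_sum⟩ : ∃ t : ℕ → Set (Euc d), E ⊆ ⋃ n, t n ∧
      (∀ n, ediam (t n) ≤ 1) ∧ ∑' n, ⨆ _ : (t n).Nonempty, ediam (t n) ^ β < μH[β] E + η / 2 := by
    have h : ⨅ (t : ℕ → Set (Euc d)) (_ : E ⊆ ⋃ n, t n) (_ : ∀ n, ediam (t n) ≤ 1),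
        ∑' n, ⨆ _ : (t n).Nonempty, ediam (t n) ^ β ≤ μH[β] E := by
      rw [Measure.hausdorffMeasure_apply]
      exact le_iSup₂_of_le (1 : ℝ≥0∞) one_pos le_rfl
    simpa only [iInf_lt_iff, exists_prop] using h.trans_lt (ENNReal.lt_add_right hμ hη₂)
  have hsup : ∀ n, (⨆ _ : (t n).Nonempty, ediam (t n) ^ β) = ediam (t n) ^ β := fun n => by
    rcases (t n).eq_empty_or_nonempty with h | h <;> simp [h, hβ]
  calc hausdorffContent d β E
      ≤ ENNReal.ofReal (unitBallVolume β) * 2 ^ β * (∑' n, ediam (t n) ^ β + η / 2) :=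
        hausdorffContent_le_of_cover hβ hEt (fun n => ne_top_of_le_ne_top ENNReal.one_ne_top
          (ht_diam n)) hη₂
    _ ≤ ENNReal.ofReal (unitBallVolume β) * 2 ^ β * (μH[β] E + η / 2 + η / 2) := by
        gcongr
        simpa only [hsup] using ht_sum.le
    _ = ENNReal.ofReal (unitBallVolume β) * 2 ^ β * (μH[β] E + η) := by
        rw [add_assoc, ENNReal.add_halves]

lemma hausdorffContent_le_volume (hd : 0 < d) (E : Set (Euc d)) :
    hausdorffContent d d E ≤ ENNReal.ofReal (unitBallVolume d) * 2 ^ (d : ℝ) *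
      ((d : ℝ≥0∞) ^ (2⁻¹ : ℝ)) ^ (d : ℝ) * volume E := by
  rw [mul_assoc _ (_ ^ (d : ℝ))]
  exact (hausdorffContent_le_hausdorffMeasure (Nat.cast_pos.2 hd) E).trans
    (mul_le_mul_right (hausdorffMeasure_le_volume E) _)

end Content

section BMO

variable {d : ℕ} {u : Euc d → ℝ}

lemma choquetIntegral_volume_cube (hu : AEMeasurable u volume) (Q : Cube d) (c : ℝ) :
    choquetIntegral volume Q.set (fun x => |u x - c|) =
      ∫⁻ x in Q.set, ENNReal.ofReal |u x - c| :=
  choquetIntegral_measure_eq_setLIntegral Q.measurableSet_set (fun _ => abs_nonneg _)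
    (hu.sub_const c).abs.restrict

lemma bmoSeminorm_le_mul_bmoClassical {A : ℝ≥0∞} (hA_top : A ≠ ⊤)
    (hA : ∀ E, hausdorffContent d d E ≤ A * volume E) (hu : AEMeasurable u volume)
    (Q₀ : Set (Euc d)) : bmoSeminorm d d Q₀ u ≤ A * bmoClassical d Q₀ u := by
  refine iSup₂_le fun Q hQ => (iInf_le _ (⨍ y in Q.set, u y)).trans ?_
  calc choquetIntegral (hausdorffContent d d) Q.set (fun x => |u x - ⨍ y in Q.set, u y|) /
        ENNReal.ofReal (Q.side ^ (d : ℝ))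
      ≤ A * choquetIntegral volume Q.set (fun x => |u x - ⨍ y in Q.set, u y|) /
          volume Q.set := by
        rw [Q.volume_set]
        gcongr
        exact choquetIntegral_le_const_mul hA_top hA _ _
    _ = A * ((volume Q.set)⁻¹ * ∫⁻ x in Q.set, ENNReal.ofReal |u x - ⨍ y in Q.set, u y|) := by
        rw [choquetIntegral_volume_cube hu, div_eq_mul_inv]
        ring
    _ ≤ A * bmoClassical d Q₀ u := by
        gcongr
        exact le_iSup₂_of_le Q hQ le_rfl

lemma bmoClassical_le_two_mul_bmoSeminorm (hd : 0 < d) (hu : AEMeasurable u volume)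
    (Q₀ : Set (Euc d)) : bmoClassical d Q₀ u ≤ 2 * bmoSeminorm d d Q₀ u := by
  refine iSup₂_le fun Q hQ => ?_
  have : IsFiniteMeasure (volume.restrict Q.set) := isFiniteMeasure_restrict.2 Q.volume_set_ne_top
  calc (volume Q.set)⁻¹ * ∫⁻ x in Q.set, ENNReal.ofReal |u x - ⨍ y in Q.set, u y|
      ≤ 2 * ⨅ c : ℝ, choquetIntegral (hausdorffContent d d) Q.set (fun x => |u x - c|) /
          ENNReal.ofReal (Q.side ^ (d : ℝ)) := by
        rw [ENNReal.mul_iInf_of_ne two_ne_zero ENNReal.ofNat_ne_top]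
        refine le_iInf fun c => ?_
        calc (volume Q.set)⁻¹ * ∫⁻ x in Q.set, ENNReal.ofReal |u x - ⨍ y in Q.set, u y|
            ≤ (volume Q.set)⁻¹ * (2 * ∫⁻ x in Q.set, ENNReal.ofReal |u x - c|) := by
              gcongr
              exact lintegral_abs_sub_average_le hu.restrict c
          _ = 2 * (choquetIntegral volume Q.set (fun x => |u x - c|) / volume Q.set) := by
              rw [choquetIntegral_volume_cube hu, div_eq_mul_inv]
              ring
          _ ≤ 2 * (choquetIntegral (hausdorffContent d d) Q.set (fun x => |u x - c|) /
                ENNReal.ofReal (Q.side ^ (d : ℝ))) := by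
              rw [Q.volume_set]
              gcongr
              exact choquetIntegral_mono_content (volume_le_hausdorffContent hd) _ _
    _ ≤ 2 * bmoSeminorm d d Q₀ u := by
        gcongr
        exact le_iSup₂_of_le Q hQ le_rfl

end BMO

theorem bmo_top_dimension_eq_classical (d : ℕ) (hd : 1 ≤ d) (Q₀ : Cube d) :
    ∃ C : ℝ, 0 < C ∧
      ∀ u : Euc d → ℝ, MemChoquetL1 (hausdorffContent d (d : ℝ)) Q₀.set u →
        ENNReal.ofReal (1 / C) * bmoSeminorm d (d : ℝ) Q₀.set u ≤ bmoClassical d Q₀.set u ∧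
        bmoClassical d Q₀.set u ≤ ENNReal.ofReal C * bmoSeminorm d (d : ℝ) Q₀.set u := by
  set A : ℝ≥0∞ := ENNReal.ofReal (unitBallVolume d) * 2 ^ (d : ℝ) *
    ((d : ℝ≥0∞) ^ (2⁻¹ : ℝ)) ^ (d : ℝ)
  have hA_top : A ≠ ⊤ := by finiteness
  set C := max A.toReal 2
  have hC : 0 < C := lt_max_of_lt_right two_pos
  have hAC : A ≤ ENNReal.ofReal C :=
    (ENNReal.ofReal_toReal hA_top).symm.le.trans (ENNReal.ofReal_le_ofReal (le_max_left _ _))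
  have h2C : 2 ≤ ENNReal.ofReal C := by
    rw [← ENNReal.ofReal_ofNat 2]
    exact ENNReal.ofReal_le_ofReal (le_max_right _ _)
  refine ⟨C, hC, fun u hu => ?_⟩
  have hu_meas : AEMeasurable u volume := hu.1.aemeasurable (volume_le_hausdorffContent hd)
  constructor
  · calc ENNReal.ofReal (1 / C) * bmoSeminorm d d Q₀.set u
        ≤ ENNReal.ofReal (1 / C) * (ENNReal.ofReal C * bmoClassical d Q₀.set u) := by
          gcongr
          exact (bmoSeminorm_le_mul_bmoClassical hA_top (hausdorffContent_le_volume hd)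
            hu_meas _).trans (by gcongr)
      _ = bmoClassical d Q₀.set u := by
          rw [← mul_assoc, ← ENNReal.ofReal_mul (by positivity), one_div_mul_cancel hC.ne',
            ENNReal.ofReal_one, one_mul]
  · exact (bmoClassical_le_two_mul_bmoSeminorm hd hu_meas _).trans (by gcongr)

end
end

section
/- Let d ≥ 1, β ∈ (0,d], and let Q ⊂ ℝ^d be a cube. Define the dyadic β-Hausdorff maximal function 𝓜^{β,Q}_∞ f(x) := sup{ l(Q')^{-β} ∫_{Q'} |f| d𝓗^{β,Q}_∞ : Q' ∈ 𝓓(Q), x ∈ Q' }. There exists a constant C' > 0 depending only on β and d such that for every f ∈ L¹(ℝ^d; 𝓗^{β,Q}_∞) and every t > 0, 𝓗^{β,Q}_∞({x ∈ ℝ^d : 𝓜^{β,Q}_∞ f(x) > t}) ≤ (C'/t) ∫_{ℝ^d} |f| d𝓗^{β,Q}_∞. -/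
open Set MeasureTheory ENNReal NNReal Filter

noncomputable section

/-!
The superlevel set `{𝓜f > t}` is covered by the maximal dyadic cubes `C` with
`t l(C)^β < ∫_C |f| d𝓗`, which are pairwise disjoint. Cutting the Choquet integral at the levels
`s_k = t 2^(k-1)` gives `l(C)^β ≤ ∑_k 2^k 𝓗(C ∩ {|f| > s_k})` for each of them. The content is
not additive, but it packs over disjoint dyadic cubes: a cube of a dyadic cover of `{|f| > s_k}`
that meets `C` either lies inside `C` or contains it. Cubes `C` of the second kind are absorbed
into the covers; for the others, the covers of nearly optimal cost split among the `C`. Hence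
`𝓗(⋃ C) ≤ 2 ∑_k 2^k 𝓗({|f| > s_k}) ≤ (8/t) ∫ |f| d𝓗`, the last step again by cutting the
Choquet integral at the levels `s_k`.
-/

open Topology

attribute [ext] Cube

theorem Ico_subset_Ico_of_mem_grid {u b x : ℝ} {j : ℤ} {m : ℕ} (hu : 0 < u)
    (hxa : x ∈ Ico (b + j * u) (b + j * u + u)) (hxb : x ∈ Ico b (b + 2 ^ m * u)) :
    Ico (b + j * u) (b + j * u + u) ⊆ Ico b (b + 2 ^ m * u) := by
  have hj : (0 : ℝ) ≤ j := by
    have : (-1 : ℝ) < j := by nlinarith [hxa.2, hxb.1]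
    have : (-1 : ℤ) < j := by exact_mod_cast this
    exact_mod_cast (show (0 : ℤ) ≤ j by omega)
  have hjm : (j : ℝ) + 1 ≤ 2 ^ m := by
    have : (j : ℝ) < (2 ^ m : ℤ) := by push_cast; nlinarith [hxa.1, hxb.2]
    exact_mod_cast Int.add_one_le_iff.mpr (by exact_mod_cast this)
  intro y hy
  exact ⟨by nlinarith [hy.1], by nlinarith [hy.2]⟩

namespace Cube

variable {d : ℕ} {Q C C₁ C₂ : Cube d}

theorem corner_mem_set (C : Cube d) : WithLp.toLp 2 C.corner ∈ C.set :=
  fun _ => ⟨le_rfl, by simpa using C.side_pos⟩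

theorem set_nonempty (C : Cube d) : C.set.Nonempty := ⟨_, C.corner_mem_set⟩

theorem dyadic_countable (Q : Cube d) : Q.dyadic.Countable := by
  let cube : ℤ × (Fin d → ℤ) → Cube d := fun p =>
    ⟨fun i => Q.corner i + p.2 i * (Q.side * 2 ^ p.1), Q.side * 2 ^ p.1,
      mul_pos Q.side_pos (zpow_pos two_pos _)⟩
  refine (countable_range cube).mono ?_
  rintro C ⟨n, k, hside, hcorner⟩
  exact ⟨(n, k), by ext i <;> simp [cube, hside, hcorner]⟩

theorem mem_set_iff {x : Euc d} : x ∈ C.set ↔ ∀ i, x i ∈ Ico (C.corner i) (C.corner i + C.side) :=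
  Iff.rfl

theorem set_subset_of_side_le (h₁ : C₁ ∈ Q.dyadic) (h₂ : C₂ ∈ Q.dyadic)
    (hs : C₁.side ≤ C₂.side) (hne : (C₁.set ∩ C₂.set).Nonempty) : C₁.set ⊆ C₂.set := by
  obtain ⟨n₁, k₁, hs₁, hc₁⟩ := h₁
  obtain ⟨n₂, k₂, hs₂, hc₂⟩ := h₂
  obtain ⟨x, hx₁, hx₂⟩ := hne
  have hn : n₁ ≤ n₂ := by
    rw [hs₁, hs₂] at hs
    exact (zpow_le_zpow_iff_right₀ (one_lt_two (α := ℝ))).mp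
      (le_of_mul_le_mul_left hs Q.side_pos)
  obtain ⟨m, rfl⟩ : ∃ m : ℕ, n₂ = n₁ + m := ⟨(n₂ - n₁).toNat, by omega⟩
  have hside₂ : C₂.side = 2 ^ m * C₁.side := by
    rw [hs₁, hs₂, zpow_add₀ two_ne_zero, zpow_natCast]; ring
  have hcorner : ∀ i, C₁.corner i = C₂.corner i + ((k₁ i - k₂ i * 2 ^ m : ℤ) : ℝ) * C₁.side := by
    intro i
    rw [hc₁, hc₂, hs₁, zpow_add₀ two_ne_zero, zpow_natCast]; push_cast; ring
  intro y hy
  rw [mem_set_iff] at hx₁ hx₂ hy ⊢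
  intro i
  have hx₁ := hx₁ i
  have hy := hy i
  rw [hcorner i] at hx₁ hy
  rw [hside₂] at hx₂ ⊢
  exact Ico_subset_Ico_of_mem_grid C₁.side_pos hx₁ (hx₂ i) hy

theorem eq_of_side_eq (h₁ : C₁ ∈ Q.dyadic) (h₂ : C₂ ∈ Q.dyadic) (hs : C₁.side = C₂.side)
    (hne : (C₁.set ∩ C₂.set).Nonempty) : C₁ = C₂ := by
  have h₁₂ := set_subset_of_side_le h₁ h₂ hs.le hne
  have h₂₁ := set_subset_of_side_le h₂ h₁ hs.ge (inter_comm C₁.set _ ▸ hne)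
  ext i
  · exact le_antisymm (h₂₁ C₂.corner_mem_set i).1 (h₁₂ C₁.corner_mem_set i).1
  · exact hs

theorem exists_mem_dyadic_ofReal_rpow_lt {β : ℝ} (hβ : 0 < β) {δ : ℝ≥0∞} (hδ : δ ≠ 0) :
    ∃ C ∈ Q.dyadic, ENNReal.ofReal (C.side ^ β) < δ := by
  let cube : ℕ → Cube d := fun N =>
    ⟨Q.corner, Q.side * 2 ^ (-N : ℤ), mul_pos Q.side_pos (zpow_pos two_pos _)⟩
  have hlim : Tendsto (fun N => ENNReal.ofReal ((cube N).side ^ β)) atTop (𝓝 0) := by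
    have hside : Tendsto (fun N : ℕ => Q.side * (2⁻¹ : ℝ) ^ N) atTop (𝓝 0) := by
      simpa using (tendsto_pow_atTop_nhds_zero_of_lt_one (by norm_num : (0 : ℝ) ≤ 2⁻¹)
        (by norm_num)).const_mul Q.side
    have := ENNReal.tendsto_ofReal (hside.rpow_const (Or.inr hβ.le))
    simpa [cube, Real.zero_rpow hβ.ne', inv_pow] using this
  obtain ⟨N, hN⟩ := (hlim.eventually (gt_mem_nhds (pos_iff_ne_zero.mpr hδ))).exists
  exact ⟨cube N, ⟨-N, 0, rfl, by simp [cube]⟩, hN⟩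

def maximalDyadic (Q : Cube d) (P : Cube d → Prop) : Set (Cube d) :=
  {C | C ∈ Q.dyadic ∧ P C ∧ ∀ C' ∈ Q.dyadic, P C' → C.set ⊆ C'.set → C'.side ≤ C.side}

variable {P : Cube d → Prop}

theorem maximalDyadic_subset : Q.maximalDyadic P ⊆ Q.dyadic := fun _ hC => hC.1

theorem pairwiseDisjoint_maximalDyadic : (Q.maximalDyadic P).PairwiseDisjoint Cube.set := by
  have key : ∀ C₁ ∈ Q.maximalDyadic P, ∀ C₂ ∈ Q.maximalDyadic P, C₁.side ≤ C₂.side →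
      (C₁.set ∩ C₂.set).Nonempty → C₁ = C₂ := fun C₁ h₁ C₂ h₂ hs hne =>
    eq_of_side_eq h₁.1 h₂.1
      (hs.antisymm (h₁.2.2 C₂ h₂.1 h₂.2.1 (set_subset_of_side_le h₁.1 h₂.1 hs hne))) hne
  intro C₁ h₁ C₂ h₂ hne
  by_contra hint
  rw [Function.onFun, not_disjoint_iff_nonempty_inter] at hint
  refine hne ?_
  rcases le_total C₁.side C₂.side with hs | hs
  · exact key C₁ h₁ C₂ h₂ hs hint
  · exact (key C₂ h₂ C₁ h₁ hs (inter_comm C₁.set _ ▸ hint)).symm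

theorem exists_mem_maximalDyadic (hbdd : BddAbove (Cube.side '' {C ∈ Q.dyadic | P C}))
    {C : Cube d} (hC : C ∈ Q.dyadic) (hP : P C) {x : Euc d} (hx : x ∈ C.set) :
    ∃ C' ∈ Q.maximalDyadic P, x ∈ C'.set := by
  classical
  let scale : ℤ → Prop := fun n => ∃ C ∈ Q.dyadic, P C ∧ x ∈ C.set ∧ C.side = Q.side * 2 ^ n
  have hmono : ∀ {m n : ℤ}, m ≤ n → Q.side * 2 ^ m ≤ Q.side * 2 ^ n := fun h =>
    mul_le_mul_of_nonneg_left (zpow_le_zpow_right₀ one_le_two h) Q.side_pos.le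
  have hscale_bdd : ∃ N : ℤ, ∀ n, scale n → n ≤ N := by
    obtain ⟨L, hL⟩ := hbdd
    obtain ⟨N, hN⟩ := pow_unbounded_of_one_lt (L / Q.side) (one_lt_two (α := ℝ))
    refine ⟨N, fun n ⟨C, hC, hP, _, hside⟩ => ?_⟩
    have hCL : Q.side * 2 ^ n ≤ L := hside ▸ hL ⟨C, ⟨hC, hP⟩, rfl⟩
    have hLN : L < Q.side * 2 ^ (N : ℤ) := by
      rwa [zpow_natCast, ← div_lt_iff₀' Q.side_pos]
    by_contra! h
    exact (hCL.trans_lt hLN).not_ge (hmono h.le)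
  have ⟨n, _, hside, _⟩ := hC
  obtain ⟨n₀, ⟨C₀, hC₀, hP₀, hx₀, hside₀⟩, hmax⟩ :=
    Int.exists_greatest_of_bdd hscale_bdd ⟨n, C, hC, hP, hx, hside⟩
  refine ⟨C₀, ⟨hC₀, hP₀, fun C' hC' hP' hsub => ?_⟩, hx₀⟩
  obtain ⟨n', k', hside', hcorner'⟩ := hC'
  rw [hside', hside₀]
  exact hmono (hmax n' ⟨C', ⟨n', k', hside', hcorner'⟩, hP', hsub hx₀, hside'⟩)

theorem side_le_of_ofReal_rpow_le {β : ℝ} (hβ : 0 < β) {M : ℝ≥0∞}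
    (hM : M ≠ ⊤) (h : ENNReal.ofReal (C.side ^ β) ≤ M) : C.side ≤ M.toReal ^ β⁻¹ :=
  calc C.side = (C.side ^ β) ^ β⁻¹ := (Real.rpow_rpow_inv C.side_pos.le hβ.ne').symm
    _ ≤ M.toReal ^ β⁻¹ := Real.rpow_le_rpow (by have := C.side_pos; positivity)
        ((ENNReal.ofReal_le_iff_le_toReal hM).mp h) (inv_nonneg.mpr hβ.le)

end Cube

section LayerCake

variable {φ : ℝ → ℝ≥0∞} {c : ℝ}

theorem ofReal_mul_two_pow (hc : 0 ≤ c) (k : ℕ) :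
    ENNReal.ofReal (c * 2 ^ k) = ENNReal.ofReal c * 2 ^ k := by
  rw [ENNReal.ofReal_mul hc, ENNReal.ofReal_pow zero_le_two, ENNReal.ofReal_ofNat]

theorem lintegral_Ioi_le_of_antitone (hφ : Antitone φ) (hc : 0 < c) :
    ∫⁻ s in Ioi 0, φ s ≤ ENNReal.ofReal c * (φ 0 + ∑' k : ℕ, 2 ^ k * φ (c * 2 ^ k)) := by
  have hcover : Ioi (0 : ℝ) ⊆ Ioc 0 c ∪ ⋃ k : ℕ, Ico (c * 2 ^ k) (c * 2 ^ (k + 1)) := by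
    intro s hs
    rcases le_or_gt s c with hsc | hsc
    · exact Or.inl ⟨hs, hsc⟩
    · obtain ⟨k, hk₁, hk₂⟩ := exists_nat_pow_near ((one_le_div hc).mpr hsc.le) one_lt_two
      exact Or.inr (mem_iUnion.mpr ⟨k, (le_div_iff₀' hc).mp hk₁, (div_lt_iff₀' hc).mp hk₂⟩)
  have hpiece : ∀ {I : Set ℝ} {v : ℝ≥0∞}, (∀ s ∈ I, φ s ≤ v) → ∫⁻ s in I, φ s ≤ v * volume I :=
    fun h => (setLIntegral_mono measurable_const h).trans (setLIntegral_const _ _).le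
  calc ∫⁻ s in Ioi 0, φ s
      ≤ ∫⁻ s in Ioc 0 c ∪ ⋃ k : ℕ, Ico (c * 2 ^ k) (c * 2 ^ (k + 1)), φ s :=
        lintegral_mono_set hcover
    _ ≤ (∫⁻ s in Ioc 0 c, φ s) + ∑' k : ℕ, ∫⁻ s in Ico (c * 2 ^ k) (c * 2 ^ (k + 1)), φ s :=
        (lintegral_union_le _ _ _).trans (add_le_add le_rfl (lintegral_iUnion_le _ _))
    _ ≤ φ 0 * ENNReal.ofReal c + ∑' k : ℕ, φ (c * 2 ^ k) * ENNReal.ofReal (c * 2 ^ k) := by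
        refine add_le_add ?_ (ENNReal.tsum_le_tsum fun k => ?_)
        · exact (hpiece fun s hs => hφ hs.1.le).trans_eq (by rw [Real.volume_Ioc, sub_zero])
        · exact (hpiece fun s hs => hφ hs.1).trans_eq (by rw [Real.volume_Ico]; ring_nf)
    _ = ENNReal.ofReal c * (φ 0 + ∑' k : ℕ, 2 ^ k * φ (c * 2 ^ k)) := by
        simp only [ofReal_mul_two_pow hc.le, mul_add, ← ENNReal.tsum_mul_left]
        congr 1 <;> [ring; exact tsum_congr fun k => by ring]

theorem tsum_le_lintegral_Ioi_of_antitone (hφ : Antitone φ) (hc : 0 < c) :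
    ENNReal.ofReal c * ∑' k : ℕ, 2 ^ k * φ (c * 2 ^ (k + 1)) ≤ ∫⁻ s in Ioi 0, φ s := by
  have hmono : Monotone fun k : ℕ => c * 2 ^ k := fun m n h =>
    mul_le_mul_of_nonneg_left (pow_le_pow_right₀ one_le_two h) hc.le
  calc ENNReal.ofReal c * ∑' k : ℕ, 2 ^ k * φ (c * 2 ^ (k + 1))
      = ∑' k : ℕ, φ (c * 2 ^ (k + 1)) * volume (Ioc (c * 2 ^ k) (c * 2 ^ (k + 1))) := by
        rw [← ENNReal.tsum_mul_left]
        refine tsum_congr fun k => ?_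
        rw [Real.volume_Ioc, show c * 2 ^ (k + 1) - c * 2 ^ k = c * 2 ^ k by ring,
          ofReal_mul_two_pow hc.le]
        ring
    _ ≤ ∑' k : ℕ, ∫⁻ s in Ioc (c * 2 ^ k) (c * 2 ^ (k + 1)), φ s := by
        gcongr with k
        rw [← setLIntegral_const]
        exact setLIntegral_mono' measurableSet_Ioc fun s hs => hφ hs.2
    _ = ∫⁻ s in ⋃ k : ℕ, Ioc (c * 2 ^ k) (c * 2 ^ (k + 1)), φ s :=
        (lintegral_iUnion (fun _ => measurableSet_Ioc)
          (by simpa using hmono.pairwise_disjoint_on_Ioc_succ) _).symm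
    _ ≤ ∫⁻ s in Ioi 0, φ s := lintegral_mono_set <| iUnion_subset fun k s hs =>
        (mul_pos hc (pow_pos two_pos k)).trans hs.1

end LayerCake

section Choquet

variable {X : Type*} {H : Set X → ℝ≥0∞} {A B : Set X} {g : X → ℝ}

theorem antitone_superlevel (hH : Monotone H) (A : Set X) (g : X → ℝ) :
    Antitone fun s => H {x | x ∈ A ∧ s < g x} :=
  fun _ _ hss' => hH fun _ hx => ⟨hx.1, hss'.trans_lt hx.2⟩

theorem choquetIntegral_mono_set (hH : Monotone H) (hAB : A ⊆ B) :
    choquetIntegral H A g ≤ choquetIntegral H B g :=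
  lintegral_mono fun _ => hH fun _ hx => ⟨hAB hx.1, hx.2⟩

end Choquet

theorem tsum_le_of_subsingleton_support {α : Type*} {f : α → ℝ≥0∞} {a : ℝ≥0∞}
    (hf : ∀ x, f x ≤ a) (huniq : ∀ x y, f x ≠ 0 → f y ≠ 0 → x = y) : ∑' x, f x ≤ a := by
  by_cases h : ∃ x, f x ≠ 0
  · obtain ⟨x, hx⟩ := h
    rw [tsum_eq_single x fun y hyx => by_contra fun hy => hyx (huniq y x hy hx)]
    exact hf x
  · simp_all

section DyadicContent

variable {d : ℕ} {β : ℝ} {Q : Cube d}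

theorem monotone_dyadicContent : Monotone (dyadicContent d β Q) := fun _ _ hEF =>
  le_iInf₂ fun c hc => le_iInf fun hF => iInf₂_le_of_le c hc (iInf_le _ (hEF.trans hF))

theorem dyadicContent_le_tsum (hβ : 0 < β) {ι : Type*} [Countable ι] (R : ι → Cube d)
    (hR : ∀ i, R i ∈ Q.dyadic) {E : Set (Euc d)} (hE : E ⊆ ⋃ i, (R i).set) :
    dyadicContent d β Q E ≤ ∑' i, ENNReal.ofReal ((R i).side ^ β) := by
  refine ENNReal.le_of_forall_pos_le_add fun ε hε _ => ?_
  obtain ⟨δ, hδ, hδε⟩ := ENNReal.exists_pos_sum_of_countable (ENNReal.coe_ne_zero.mpr hε.ne') ℕ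
  choose τ hτ hτδ using fun m => Q.exists_mem_dyadic_ofReal_rpow_lt hβ (δ := δ m)
    (by simpa using (hδ m).ne')
  -- padding the cover by the tiny cubes `τ m` makes it infinite, hence indexable by `ℕ`
  obtain ⟨e⟩ : Nonempty (ℕ ≃ ι ⊕ ℕ) := inferInstance
  let c : ι ⊕ ℕ → Cube d := Sum.elim R τ
  have hc : ∀ n, c (e n) ∈ Q.dyadic := fun n => by cases e n <;> simp [c, hR, hτ]
  have hcover : E ⊆ ⋃ n, (c (e n)).set := fun x hx => by
    obtain ⟨i, hi⟩ := mem_iUnion.mp (hE hx)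
    exact mem_iUnion.mpr ⟨e.symm (.inl i), by simpa [c] using hi⟩
  calc dyadicContent d β Q E ≤ ∑' n, ENNReal.ofReal ((c (e n)).side ^ β) :=
        iInf₂_le_of_le _ hc (iInf_le _ hcover)
    _ = ∑' p, ENNReal.ofReal ((c p).side ^ β) := e.tsum_eq fun p => ENNReal.ofReal ((c p).side ^ β)
    _ = (∑' i, ENNReal.ofReal ((R i).side ^ β)) + ∑' m, ENNReal.ofReal ((τ m).side ^ β) :=
        ENNReal.summable.tsum_sum ENNReal.summable
    _ ≤ (∑' i, ENNReal.ofReal ((R i).side ^ β)) + ε := by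
        gcongr
        exact (ENNReal.tsum_le_tsum fun m => (hτδ m).le).trans hδε.le

theorem dyadicContent_set_le (hβ : 0 < β) {C : Cube d} (hC : C ∈ Q.dyadic) :
    dyadicContent d β Q C.set ≤ ENNReal.ofReal (C.side ^ β) := by
  simpa using dyadicContent_le_tsum hβ (fun _ : Unit => C) (fun _ => hC)
    fun x hx => mem_iUnion.mpr ⟨(), hx⟩

theorem exists_cover_tsum_le {E : Set (Euc d)} (hE : dyadicContent d β Q E ≠ ⊤) {δ : ℝ≥0∞}
    (hδ : δ ≠ 0) : ∃ R : ℕ → Cube d, (∀ j, R j ∈ Q.dyadic) ∧ E ⊆ ⋃ j, (R j).set ∧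
      ∑' j, ENNReal.ofReal ((R j).side ^ β) ≤ dyadicContent d β Q E + δ := by
  have := ENNReal.lt_add_right hE hδ
  simp only [dyadicContent, iInf_lt_iff] at this
  obtain ⟨R, hR, hcover, hlt⟩ := this
  exact ⟨R, hR, hcover, hlt.le⟩

theorem tsum_dyadicContent_inter_le (hβ : 0 < β) {S : Set (Cube d)} (hS : S ⊆ Q.dyadic)
    (hdisj : S.PairwiseDisjoint Cube.set) {R : ℕ → Cube d} (hR : ∀ j, R j ∈ Q.dyadic)
    {E : Set (Euc d)} (hE : E ⊆ ⋃ j, (R j).set) (hS_not_sub : ∀ C ∈ S, ∀ j, ¬C.set ⊆ (R j).set) :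
    ∑' C : S, dyadicContent d β Q (C.1.set ∩ E) ≤ ∑' j, ENNReal.ofReal ((R j).side ^ β) := by
  have hinside : ∀ C ∈ S, ∀ j, ((R j).set ∩ C.set).Nonempty → (R j).set ⊆ C.set := by
    intro C hC j hne
    rcases le_total (R j).side C.side with h | h
    · exact Cube.set_subset_of_side_le (hR j) (hS hC) h hne
    · exact absurd (Cube.set_subset_of_side_le (hS hC) (hR j) h (inter_comm (R j).set _ ▸ hne))
        (hS_not_sub C hC j)
  have hC : ∀ C : S, dyadicContent d β Q (C.1.set ∩ E) ≤
      ∑' j, {j | (R j).set ⊆ C.1.set}.indicator (fun j => ENNReal.ofReal ((R j).side ^ β)) j := by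
    intro C
    rw [← tsum_subtype]
    refine dyadicContent_le_tsum hβ (fun j : {j | (R j).set ⊆ C.1.set} => R j) (fun j => hR j)
      fun x ⟨hxC, hxE⟩ => ?_
    obtain ⟨j, hj⟩ := mem_iUnion.mp (hE hxE)
    exact mem_iUnion.mpr ⟨⟨j, hinside C C.2 j ⟨x, hj, hxC⟩⟩, hj⟩
  calc ∑' C : S, dyadicContent d β Q (C.1.set ∩ E)
      ≤ ∑' (C : S) (j), {j | (R j).set ⊆ C.1.set}.indicator
          (fun j => ENNReal.ofReal ((R j).side ^ β)) j := ENNReal.tsum_le_tsum hC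
    _ = ∑' (j) (C : S), {j | (R j).set ⊆ C.1.set}.indicator
          (fun j => ENNReal.ofReal ((R j).side ^ β)) j := ENNReal.tsum_comm
    _ ≤ ∑' j, ENNReal.ofReal ((R j).side ^ β) := by
        refine ENNReal.tsum_le_tsum fun j => tsum_le_of_subsingleton_support
          (fun C => indicator_le_self' (fun _ _ => zero_le) j) fun C₁ C₂ h₁ h₂ => ?_
        have h₁ := mem_of_indicator_ne_zero h₁
        have h₂ := mem_of_indicator_ne_zero h₂
        obtain ⟨x, hx⟩ := (R j).set_nonempty
        exact Subtype.ext (hdisj.elim C₁.2 C₂.2 (not_disjoint_iff.mpr ⟨x, h₁ hx, h₂ hx⟩))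

theorem exists_covers_tsum_mul_le {E : ℕ → Set (Euc d)} (hE : ∀ k, dyadicContent d β Q (E k) ≠ ⊤)
    {w : ℕ → ℝ≥0∞} (hw : ∀ k, w k ≠ ⊤) {ε : ℝ≥0∞} (hε : ε ≠ 0) :
    ∃ R : ℕ → ℕ → Cube d, (∀ k j, R k j ∈ Q.dyadic) ∧ (∀ k, E k ⊆ ⋃ j, (R k j).set) ∧
      ∑' k, w k * ∑' j, ENNReal.ofReal ((R k j).side ^ β) ≤
        ∑' k, w k * dyadicContent d β Q (E k) + ε := by
  obtain ⟨δ, hδ, hδε⟩ := ENNReal.exists_pos_tsum_mul_lt_of_countable hε w hw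
  choose R hR hRcov hRcost using fun k =>
    exists_cover_tsum_le (hE k) (δ := δ k) (by simpa using (hδ k).ne')
  refine ⟨R, hR, hRcov, ?_⟩
  calc ∑' k, w k * ∑' j, ENNReal.ofReal ((R k j).side ^ β)
      ≤ ∑' k, (w k * dyadicContent d β Q (E k) + w k * δ k) := by
        gcongr with k
        rw [← mul_add]
        exact mul_le_mul_right (hRcost k) _
    _ ≤ ∑' k, w k * dyadicContent d β Q (E k) + ε := by
        rw [ENNReal.tsum_add]
        exact add_le_add_right hδε.le _

theorem dyadicContent_biUnion_le_of_covers (hβ : 0 < β) {S : Set (Cube d)} (hS : S ⊆ Q.dyadic)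
    (hdisj : S.PairwiseDisjoint Cube.set) {E : ℕ → Set (Euc d)}
    (hside : ∀ C ∈ S, ENNReal.ofReal (C.side ^ β) ≤
      ∑' k, 2 ^ k * dyadicContent d β Q (C.set ∩ E k))
    {R : ℕ → ℕ → Cube d} (hR : ∀ k j, R k j ∈ Q.dyadic) (hRcov : ∀ k, E k ⊆ ⋃ j, (R k j).set) :
    dyadicContent d β Q (⋃ C ∈ S, C.set) ≤
      2 * ∑' k, 2 ^ k * ∑' j, ENNReal.ofReal ((R k j).side ^ β) := by
  set cost : ℕ → ℝ≥0∞ := fun k => ∑' j, ENNReal.ofReal ((R k j).side ^ β)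
  -- cubes of `S` lying in a cover cube are paid for by the covers, the others by packing
  let good : Set (Cube d) := {C ∈ S | ∀ k j, ¬C.set ⊆ (R k j).set}
  have : Countable good := ((Q.dyadic_countable.mono hS).mono (sep_subset _ _)).to_subtype
  have hgood : ∑' C : good, ENNReal.ofReal (C.1.side ^ β) ≤ ∑' k, 2 ^ k * cost k :=
    calc ∑' C : good, ENNReal.ofReal (C.1.side ^ β)
        ≤ ∑' (C : good) (k), 2 ^ k * dyadicContent d β Q (C.1.set ∩ E k) :=
          ENNReal.tsum_le_tsum fun C => hside C C.2.1
      _ = ∑' (k) (C : good), 2 ^ k * dyadicContent d β Q (C.1.set ∩ E k) := ENNReal.tsum_comm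
      _ ≤ ∑' k, 2 ^ k * cost k := by
          simp_rw [ENNReal.tsum_mul_left]
          gcongr with k
          exact tsum_dyadicContent_inter_le hβ (sep_subset _ _ |>.trans hS)
            (hdisj.subset (sep_subset _ _)) (hR k) (hRcov k) fun C hC => hC.2 k
  let cover : good ⊕ ℕ × ℕ → Cube d := Sum.elim Subtype.val fun p => R p.1 p.2
  have hcover : ⋃ C ∈ S, C.set ⊆ ⋃ i, (cover i).set := by
    simp only [iUnion_subset_iff]
    intro C hC x hx
    by_cases hCgood : ∀ k j, ¬C.set ⊆ (R k j).set
    · exact mem_iUnion.mpr ⟨.inl ⟨C, hC, hCgood⟩, hx⟩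
    · push Not at hCgood
      obtain ⟨k, j, hCR⟩ := hCgood
      exact mem_iUnion.mpr ⟨.inr (k, j), hCR hx⟩
  calc dyadicContent d β Q (⋃ C ∈ S, C.set)
      ≤ ∑' i, ENNReal.ofReal ((cover i).side ^ β) :=
        dyadicContent_le_tsum hβ cover (Sum.rec (fun C => hS C.2.1) fun p => hR p.1 p.2) hcover
    _ = ∑' C : good, ENNReal.ofReal (C.1.side ^ β) + ∑' k, cost k := by
        rw [ENNReal.summable.tsum_sum ENNReal.summable]
        exact congrArg _ (ENNReal.tsum_prod (f := fun k j => ENNReal.ofReal ((R k j).side ^ β)))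
    _ ≤ ∑' k, 2 ^ k * cost k + ∑' k, 2 ^ k * cost k := by
        gcongr with k
        exact le_mul_of_one_le_left zero_le (one_le_pow₀ one_le_two)
    _ = 2 * ∑' k, 2 ^ k * cost k := (two_mul _).symm

theorem dyadicContent_biUnion_le (hβ : 0 < β) {S : Set (Cube d)} (hS : S ⊆ Q.dyadic)
    (hdisj : S.PairwiseDisjoint Cube.set) {E : ℕ → Set (Euc d)}
    (hside : ∀ C ∈ S, ENNReal.ofReal (C.side ^ β) ≤
      ∑' k, 2 ^ k * dyadicContent d β Q (C.set ∩ E k)) :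
    dyadicContent d β Q (⋃ C ∈ S, C.set) ≤ 2 * ∑' k, 2 ^ k * dyadicContent d β Q (E k) := by
  rcases eq_or_ne (∑' k, 2 ^ k * dyadicContent d β Q (E k)) ⊤ with htop | htop
  · simp [htop]
  have hE : ∀ k, dyadicContent d β Q (E k) ≠ ⊤ := fun k hk =>
    ENNReal.ne_top_of_tsum_ne_top htop k (by simp [hk])
  refine ENNReal.le_of_forall_pos_le_add fun ε hε _ => ?_
  obtain ⟨R, hR, hRcov, hRcost⟩ := exists_covers_tsum_mul_le hE (w := fun k => 2 ^ k)
    (fun k => ENNReal.pow_ne_top ENNReal.ofNat_ne_top)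
    (ENNReal.half_pos (ENNReal.coe_ne_zero.mpr hε.ne')).ne'
  calc dyadicContent d β Q (⋃ C ∈ S, C.set)
      ≤ 2 * ∑' k, 2 ^ k * ∑' j, ENNReal.ofReal ((R k j).side ^ β) :=
        dyadicContent_biUnion_le_of_covers hβ hS hdisj hside hR hRcov
    _ ≤ 2 * (∑' k, 2 ^ k * dyadicContent d β Q (E k) + ε / 2) := by gcongr
    _ = 2 * ∑' k, 2 ^ k * dyadicContent d β Q (E k) + ε := by
        rw [mul_add, ENNReal.mul_div_cancel two_ne_zero ENNReal.ofNat_ne_top]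

end DyadicContent

section MaximalFunction

def IsStoppingCube (d : ℕ) (β : ℝ) (Q : Cube d) (f : Euc d → ℝ) (t : ℝ) (C : Cube d) : Prop :=
  ENNReal.ofReal t * ENNReal.ofReal (C.side ^ β) <
    choquetIntegral (dyadicContent d β Q) C.set (fun y => |f y|)

variable {d : ℕ} {β : ℝ} {Q : Cube d} {f : Euc d → ℝ} {t : ℝ}

theorem setOf_lt_dyadicMaximal_subset (hβ : 0 < β) (ht : 0 < t)
    (hf : choquetIntegral (dyadicContent d β Q) univ (fun y => |f y|) ≠ ⊤) :
    {x | ENNReal.ofReal t < dyadicMaximal d β Q f x} ⊆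
      ⋃ C ∈ Q.maximalDyadic (IsStoppingCube d β Q f t), C.set := by
  intro x hx
  simp only [mem_ofPred_eq, dyadicMaximal, lt_iSup_iff] at hx
  obtain ⟨C, hC, hxC, hlt⟩ := hx
  have hC_pos : ENNReal.ofReal (C.side ^ β) ≠ 0 :=
    (ENNReal.ofReal_pos.mpr (Real.rpow_pos_of_pos C.side_pos β)).ne'
  have hCstop : IsStoppingCube d β Q f t C :=
    (ENNReal.lt_div_iff_mul_lt (.inl hC_pos) (.inl ENNReal.ofReal_ne_top)).mp hlt
  have hbdd : BddAbove (Cube.side '' {C ∈ Q.dyadic | IsStoppingCube d β Q f t C}) := by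
    have ht' : ENNReal.ofReal t ≠ 0 := (ENNReal.ofReal_pos.mpr ht).ne'
    refine ⟨_, forall_mem_image.mpr fun C ⟨_, hCstop⟩ => Cube.side_le_of_ofReal_rpow_le hβ
      (ENNReal.div_ne_top hf ht') ?_⟩
    rw [ENNReal.le_div_iff_mul_le (.inl ht') (.inl ENNReal.ofReal_ne_top), mul_comm]
    exact (hCstop.trans_le (choquetIntegral_mono_set monotone_dyadicContent (subset_univ _))).le
  obtain ⟨C', hC', hxC'⟩ := Cube.exists_mem_maximalDyadic hbdd hC hCstop hxC
  exact mem_biUnion hC' hxC'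

theorem IsStoppingCube.ofReal_rpow_le_tsum (hβ : 0 < β) (ht : 0 < t) {C : Cube d}
    (hC : C ∈ Q.dyadic) (hCstop : IsStoppingCube d β Q f t C) :
    ENNReal.ofReal (C.side ^ β) ≤
      ∑' k : ℕ, 2 ^ k * dyadicContent d β Q (C.set ∩ {x | t / 2 * 2 ^ k < |f x|}) := by
  set a := ENNReal.ofReal (C.side ^ β)
  set b := ∑' k : ℕ, 2 ^ k * dyadicContent d β Q (C.set ∩ {x | t / 2 * 2 ^ k < |f x|})
  have hupper : choquetIntegral (dyadicContent d β Q) C.set (fun y => |f y|) ≤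
      ENNReal.ofReal (t / 2) * (a + b) := by
    refine (lintegral_Ioi_le_of_antitone (antitone_superlevel monotone_dyadicContent _ _)
      (half_pos ht)).trans ?_
    gcongr
    · exact (monotone_dyadicContent fun x hx => hx.1).trans (dyadicContent_set_le hβ hC)
    · exact le_rfl
  have hlt : ENNReal.ofReal (t / 2) * (a + a) < ENNReal.ofReal (t / 2) * (a + b) :=
    calc ENNReal.ofReal (t / 2) * (a + a) = ENNReal.ofReal t * a := by
          rw [← two_mul, ← mul_assoc, ← ENNReal.ofReal_ofNat 2,
            ← ENNReal.ofReal_mul (half_pos ht).le, div_mul_cancel₀ t two_ne_zero]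
      _ < ENNReal.ofReal (t / 2) * (a + b) := hCstop.trans_le hupper
  exact ((ENNReal.add_lt_add_iff_left ENNReal.ofReal_ne_top).mp
    ((ENNReal.mul_lt_mul_iff_right (ENNReal.ofReal_pos.mpr (half_pos ht)).ne'
      ENNReal.ofReal_ne_top).mp hlt)).le

theorem two_mul_tsum_dyadicContent_superlevel_le (ht : 0 < t) :
    2 * ∑' k : ℕ, 2 ^ k * dyadicContent d β Q {x | t / 2 * 2 ^ k < |f x|} ≤
      ENNReal.ofReal (8 / t) * choquetIntegral (dyadicContent d β Q) univ (fun x => |f x|) := by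
  have h := tsum_le_lintegral_Ioi_of_antitone
    (antitone_superlevel (monotone_dyadicContent (β := β) (Q := Q)) univ fun x => |f x|)
    (by positivity : 0 < t / 4)
  simp only [mem_univ, true_and, show ∀ k : ℕ, t / 4 * 2 ^ (k + 1) = t / 2 * 2 ^ k from
    fun k => by ring] at h
  calc 2 * ∑' k : ℕ, 2 ^ k * dyadicContent d β Q {x | t / 2 * 2 ^ k < |f x|}
      = ENNReal.ofReal (8 / t) * (ENNReal.ofReal (t / 4) *
          ∑' k : ℕ, 2 ^ k * dyadicContent d β Q {x | t / 2 * 2 ^ k < |f x|}) := by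
        rw [← mul_assoc, ← ENNReal.ofReal_mul (by positivity),
          show 8 / t * (t / 4) = 2 by field_simp; norm_num, ENNReal.ofReal_ofNat]
    _ ≤ ENNReal.ofReal (8 / t) * choquetIntegral (dyadicContent d β Q) univ (fun x => |f x|) := by
        gcongr
        simpa [choquetIntegral] using h

end MaximalFunction

theorem dyadic_maximal_weak_type_general (d : ℕ) (β : ℝ) (hβ : 0 < β) (Q : Cube d) :
    ∃ C' : ℝ, 0 < C' ∧
      ∀ f : Euc d → ℝ, MemChoquetL1 (dyadicContent d β Q) Set.univ f →
        ∀ t : ℝ, 0 < t →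
          dyadicContent d β Q {x | ENNReal.ofReal t < dyadicMaximal d β Q f x} ≤
            ENNReal.ofReal (C' / t) *
              choquetIntegral (dyadicContent d β Q) Set.univ (fun x => |f x|) := by
  refine ⟨8, by norm_num, fun f hf t ht => ?_⟩
  calc dyadicContent d β Q {x | ENNReal.ofReal t < dyadicMaximal d β Q f x}
      ≤ dyadicContent d β Q (⋃ C ∈ Q.maximalDyadic (IsStoppingCube d β Q f t), C.set) :=
        monotone_dyadicContent (setOf_lt_dyadicMaximal_subset hβ ht hf.2.ne)
    _ ≤ 2 * ∑' k : ℕ, 2 ^ k * dyadicContent d β Q {x | t / 2 * 2 ^ k < |f x|} :=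
        dyadicContent_biUnion_le hβ Cube.maximalDyadic_subset Cube.pairwiseDisjoint_maximalDyadic
          fun C hC => hC.2.1.ofReal_rpow_le_tsum hβ ht hC.1
    _ ≤ ENNReal.ofReal (8 / t) * choquetIntegral (dyadicContent d β Q) univ (fun x => |f x|) :=
        two_mul_tsum_dyadicContent_superlevel_le ht

theorem dyadic_maximal_weak_type (d : ℕ) (hd : 1 ≤ d) (β : ℝ) (hβ : 0 < β) (hβd : β ≤ (d : ℝ))
    (Q : Cube d) :
    ∃ C' : ℝ, 0 < C' ∧
      ∀ f : Euc d → ℝ, MemChoquetL1 (dyadicContent d β Q) Set.univ f →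
        ∀ t : ℝ, 0 < t →
          dyadicContent d β Q {x | ENNReal.ofReal t < dyadicMaximal d β Q f x} ≤
            ENNReal.ofReal (C' / t) *
              choquetIntegral (dyadicContent d β Q) Set.univ (fun x => |f x|) :=
  dyadic_maximal_weak_type_general d β hβ Q
end
end
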